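/- arXiv:2107.06694 — 9 statements merged into one kernel-verified Lean document; each statement's English description precedes it below -/
import Mathlib

section
/- Every stable matching is popular: if M is a matching in a roommates instance (graph G with strict preferences over neighbors) admitting no blocking pair, then for every matching M', the number of vertices preferring M to M' is at least the number of vertices preferring M' to M. -/
/-- A roommates instance: a simple graph together with, for each vertex,
a ranking of vertices (lower rank = more preferred), injective on neighbors. -/
structure Roommates (V : Type*) where
  G : SimpleGraph V
  rank : V → V → ℕ
  rank_inj : ∀ u a b, G.Adj u a → G.Adj u b → rank u a = rank u b → a = b

variable {V : Type*}

/-- `M` encodes a matching: `M u = some v` means `u` is matched to `v`. -/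
def IsMatching (R : Roommates V) (M : V → Option V) : Prop :=
  ∀ u v, M u = some v → R.G.Adj u v ∧ M v = some u

/-- Vertex `v` prefers matching `M` to matching `M'`. -/
def Prefers (R : Roommates V) (M M' : V → Option V) (v : V) : Prop :=
  (∃ w, M v = some w ∧ M' v = none) ∨
  (∃ w w', M v = some w ∧ M' v = some w' ∧ R.rank v w < R.rank v w')

/-- `M` is popular: it never loses a head-to-head election. -/
def Popular [Fintype V] (R : Roommates V) (M : V → Option V) : Prop :=
  ∀ M', IsMatching R M' →
    {v | Prefers R M' M v}.ncard ≤ {v | Prefers R M M' v}.ncard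

/-- Edge `(u,v)` blocks `M`: each endpoint is unmatched or prefers the other
endpoint to its partner. -/
def Blocks (R : Roommates V) (M : V → Option V) (u v : V) : Prop :=
  R.G.Adj u v ∧ M u ≠ some v ∧
  (∀ w, M u = some w → R.rank u v < R.rank u w) ∧
  (∀ w, M v = some w → R.rank v u < R.rank v w)

def IsStable (R : Roommates V) (M : V → Option V) : Prop :=
  ∀ u v, ¬ Blocks R M u v

/-- `u` votes `+` for `v` against its situation in `M`
(true when `u` is unmatched or prefers `v` to its `M`-partner). -/
def VotePlus (R : Roommates V) (M : V → Option V) (u v : V) : Prop :=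
  ∀ w, M u = some w → R.rank u v < R.rank u w

/-- Non-matching edge of `G_M`, i.e. not labeled `(−,−)`. -/
def NonMatchEdge (R : Roommates V) (M : V → Option V) (u v : V) : Prop :=
  R.G.Adj u v ∧ M u ≠ some v ∧ (VotePlus R M u v ∨ VotePlus R M v u)

/-- `AltList A M b l`: the list of vertices `l` forms an alternating sequence,
whose first edge is a matching edge if `b = true` and an allowed (`A`)
non-matching edge if `b = false`. -/
def AltList (A : V → V → Prop) (M : V → Option V) : Bool → List V → Prop
  | _, [] => True
  | _, [_] => True
  | true, u :: v :: rest => M u = some v ∧ AltList A M false (v :: rest)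
  | false, u :: v :: rest => A u v ∧ AltList A M true (v :: rest)

/-- A matching of the subgraph induced on `W`. -/
def IsMatchingOn (R : Roommates V) (W : Set V) (M : V → Option V) : Prop :=
  IsMatching R M ∧ ∀ u v, M u = some v → u ∈ W ∧ v ∈ W

/-- Popularity within the subgraph induced on `W`. -/
def PopularOn (R : Roommates V) (W : Set V) (M : V → Option V) : Prop :=
  ∀ M', IsMatchingOn R W M' →
    {v | v ∈ W ∧ Prefers R M' M v}.ncard ≤ {v | v ∈ W ∧ Prefers R M M' v}.ncard

/-- Stability within the subgraph induced on `W`. -/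
def StableOn (R : Roommates V) (W : Set V) (M : V → Option V) : Prop :=
  ∀ u v, u ∈ W → v ∈ W → ¬ Blocks R M u v

/-!
If `v` prefers `M'` to the stable matching `M`, then `v` is matched in `M'`, say to `u`, and `u`
prefers `M` to `M'`: otherwise `(u, v)` would block `M`. Sending `v` to its `M'`-partner is
injective, so at least as many vertices prefer `M` as prefer `M'`.
-/

namespace IsMatching

variable {R : Roommates V} {M : V → Option V}

theorem partner_injective (hM : IsMatching R M) {v₁ v₂ u : V}
    (h₁ : M v₁ = some u) (h₂ : M v₂ = some u) : v₁ = v₂ :=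
  Option.some_injective V ((hM v₁ u h₁).2.symm.trans (hM v₂ u h₂).2)

theorem ncard_le_ncard_of_forall_partner_mem [Finite V] (hM : IsMatching R M) {S T : Set V}
    (h : ∀ v ∈ S, ∃ u ∈ T, M v = some u) : S.ncard ≤ T.ncard := by
  refine Set.ncard_le_ncard_of_injOn (fun v => (M v).getD v) ?_ ?_
  · intro v hv
    obtain ⟨u, hu, hvu⟩ := h v hv
    simpa only [hvu, Option.getD_some] using hu
  · intro v₁ hv₁ v₂ hv₂ heq
    obtain ⟨u₁, -, h₁⟩ := h v₁ hv₁
    obtain ⟨u₂, -, h₂⟩ := h v₂ hv₂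
    simp only [h₁, h₂, Option.getD_some] at heq
    exact hM.partner_injective h₁ (heq ▸ h₂)

end IsMatching

section Votes

variable {R : Roommates V} {M M' : V → Option V} {u v : V}

theorem VotePlus.ne_some (h : VotePlus R M v u) : M v ≠ some u :=
  fun hvu => lt_irrefl _ (h u hvu)

theorem Prefers.exists_partner (h : Prefers R M M' v) : ∃ u, M v = some u := by
  rcases h with ⟨u, hu, -⟩ | ⟨u, -, hu, -, -⟩ <;> exact ⟨u, hu⟩

theorem Prefers.votePlus (h : Prefers R M M' v) (hvu : M v = some u) : VotePlus R M' v u := by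
  intro w hw
  rcases h with ⟨-, -, hnone⟩ | ⟨u', w', hu', hw', hlt⟩
  · simp only [hw, reduceCtorEq] at hnone
  · obtain rfl := Option.some_injective V (hvu.symm.trans hu')
    obtain rfl := Option.some_injective V (hw.symm.trans hw')
    exact hlt

theorem votePlus_of_not_prefers (hM : IsMatching R M) (hadj : R.G.Adj u v)
    (huv : M' u = some v) (hne : M u ≠ some v) (h : ¬ Prefers R M M' u) : VotePlus R M u v := by
  intro w hw
  rcases lt_trichotomy (R.rank u v) (R.rank u w) with hlt | heq | hgt
  · exact hlt
  · obtain rfl := R.rank_inj u v w hadj (hM u w hw).1 heq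
    exact absurd hw hne
  · exact absurd (Or.inr ⟨w, v, hw, huv, hgt⟩) h

end Votes

theorem IsStable.prefers_of_partner_prefers {R : Roommates V} {M M' : V → Option V} {u v : V}
    (hM : IsMatching R M) (hstable : IsStable R M) (hM' : IsMatching R M')
    (hv : Prefers R M' M v) (hvu : M' v = some u) : Prefers R M M' u := by
  by_contra hu
  obtain ⟨hadj, huv⟩ := hM' v u hvu
  have hv_votes : VotePlus R M v u := hv.votePlus hvu
  have hne : M u ≠ some v := fun h => hv_votes.ne_some (hM u v h).2
  exact hstable u v ⟨hadj.symm, hne, votePlus_of_not_prefers hM hadj.symm huv hne hu, hv_votes⟩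

/-- every stable matching is popular. -/
theorem stable_implies_popular {V : Type*} [Fintype V] (R : Roommates V)
    (M : V → Option V) (hM : IsMatching R M) (hstable : IsStable R M) :
    Popular R M := by
  intro M' hM'
  refine hM'.ncard_le_ncard_of_forall_partner_mem fun v hv => ?_
  obtain ⟨u, hvu⟩ := hv.exists_partner
  exact ⟨u, hstable.prefers_of_partner_prefers hM hM' hv hvu, hvu⟩
end

section
/- There exists a roommates instance on 4 vertices that admits no stable matching but admits a popular matching. Specifically, for the instance with vertices {a,b,d,e} where a ranks b ≻ d ≻ e, b ranks d ≻ a ≻ e, d ranks a ≻ b ≻ e, and e ranks d ≻ b ≻ a, the matching {(a,b),(d,e)} is popular but not stable. -/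
set_option maxRecDepth 10000


variable {V : Type*}

/-- Vertices: a = 0, b = 1, d = 2, e = 3.  Preferences:
a : b ≻ d ≻ e, b : d ≻ a ≻ e, d : a ≻ b ≻ e, e : d ≻ b ≻ a. -/
def biroRank : Fin 4 → Fin 4 → ℕ :=
  ![![3, 0, 1, 2], ![1, 3, 0, 2], ![0, 1, 3, 2], ![2, 1, 0, 3]]

def biroInstance : Roommates (Fin 4) where
  G := ⊤
  rank := biroRank
  rank_inj := by decide

/-- The matching {(a,b),(d,e)}. -/
def biroM : Fin 4 → Option (Fin 4) := ![some 1, some 0, some 3, some 2]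

instance : DecidableRel biroInstance.G.Adj := fun a b =>
  decidable_of_iff (a ≠ b) (by simp [biroInstance])

instance (M : Fin 4 → Option (Fin 4)) : Decidable (IsMatching biroInstance M) := by
  unfold IsMatching; infer_instance

instance (M M' : Fin 4 → Option (Fin 4)) : DecidablePred (Prefers biroInstance M M') := by
  intro v; unfold Prefers; infer_instance

instance (M : Fin 4 → Option (Fin 4)) (u v : Fin 4) : Decidable (Blocks biroInstance M u v) := by
  unfold Blocks; infer_instance

instance (M : Fin 4 → Option (Fin 4)) : Decidable (IsStable biroInstance M) := by
  unfold IsStable; infer_instance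

lemma ncard_setOf_fin (p : Fin 4 → Prop) [DecidablePred p] :
    {v | p v}.ncard = (Finset.univ.filter p).card := by
  rw [Set.ncard_eq_toFinset_card', Set.toFinset_setOf]

/-- this 4-vertex instance admits no stable matching, but the
matching {(a,b),(d,e)} is popular and not stable. -/
theorem biro_popular_not_stable :
    IsMatching biroInstance biroM ∧
    Popular biroInstance biroM ∧
    ¬ IsStable biroInstance biroM ∧
    ∀ S : Fin 4 → Option (Fin 4), IsMatching biroInstance S → ¬ IsStable biroInstance S := by
  refine ⟨by decide, ?_, by decide, by decide⟩
  intro M' hM'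
  rw [ncard_setOf_fin, ncard_setOf_fin]
  revert hM'
  revert M'
  decide
end

section
/- If a matching M is popular, then G_M (the graph G with all (−,−) edges with respect to M removed) contains no M-alternating cycle containing a (+,+) edge. -/
variable {V : Type*}

/-!
Switch `M` along the cycle `C` to get the matching `M' = M ⊕ C`; only vertices of `C` change
partner. If a vertex of `C` prefers `M`, it votes `−` on its `M'`-edge, which lies in `G_M` and so
is not `(−,−)`: its `M'`-partner prefers `M'`. Hence `v ↦ M'(v)` injects the voters for `M` into
the voters for `M'`, and misses both endpoints of the blocking edge, which prefer `M'`. So `M'`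
wins the election against `M`.
-/

section PairUp

variable [DecidableEq V]

def pairUp : List V → V → Option V
  | a :: b :: s, u => if u = a then some b else if u = b then some a else pairUp s u
  | _, _ => none

theorem pairUp_cons_cons_of_ne {a b u : V} {s : List V} (ha : u ≠ a) (hb : u ≠ b) :
    pairUp (a :: b :: s) u = pairUp s u := by
  simp [pairUp, ha, hb]

theorem pairUp_cons_cons_eq_some {a b u v : V} {s : List V}
    (h : pairUp (a :: b :: s) u = some v) :
    (u = a ∧ v = b) ∨ (u = b ∧ v = a) ∨ pairUp s u = some v := by
  unfold pairUp at h
  split_ifs at h with ha hb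
  · exact .inl ⟨ha, (Option.some.inj h).symm⟩
  · exact .inr (.inl ⟨hb, (Option.some.inj h).symm⟩)
  · exact .inr (.inr h)

theorem mem_of_pairUp_eq_some : ∀ {s : List V} {u v : V}, pairUp s u = some v → u ∈ s ∧ v ∈ s
  | a :: b :: s, u, v, h => by
    rcases pairUp_cons_cons_eq_some h with ⟨rfl, rfl⟩ | ⟨rfl, rfl⟩ | h
    · simp
    · simp
    · have := mem_of_pairUp_eq_some h
      simp [this]

theorem pairUp_eq_some_comm : ∀ {s : List V} {u v : V}, s.Nodup →
    pairUp s u = some v → pairUp s v = some u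
  | a :: b :: s, u, v, hs, h => by
    simp only [List.nodup_cons, List.mem_cons, not_or] at hs
    obtain ⟨⟨hab, has⟩, hbs, hs⟩ := hs
    rcases pairUp_cons_cons_eq_some h with ⟨rfl, rfl⟩ | ⟨rfl, rfl⟩ | h
    · simp [pairUp, Ne.symm hab]
    · simp [pairUp]
    · have hv := (mem_of_pairUp_eq_some h).2
      rw [pairUp_cons_cons_of_ne (ne_of_mem_of_not_mem hv has) (ne_of_mem_of_not_mem hv hbs)]
      exact pairUp_eq_some_comm hs h

theorem exists_pairUp_eq_some : ∀ {s : List V} {u : V}, Even s.length → u ∈ s →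
    ∃ v, pairUp s u = some v
  | [a], _, he, _ => absurd he (by simp)
  | a :: b :: s, u, he, hu => by
    by_cases ha : u = a
    · exact ⟨b, by simp [pairUp, ha]⟩
    by_cases hb : u = b
    · exact ⟨a, by simp [pairUp, hb]⟩
    rw [pairUp_cons_cons_of_ne ha hb]
    exact exists_pairUp_eq_some (by simpa [parity_simps] using he) (by simpa [ha, hb] using hu)

end PairUp

namespace AltList

variable {A : V → V → Prop} {M : V → Option V}

theorem of_cons {b : Bool} {a : V} {s : List V} (h : AltList A M b (a :: s)) :
    AltList A M (!b) s := by
  match b, s with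
  | _, [] => trivial
  | true, _ :: _ => exact h.2
  | false, _ :: _ => exact h.2

theorem of_cons_cons {b : Bool} {a c : V} {s : List V} (h : AltList A M b (a :: c :: s)) :
    AltList A M b s := by
  simpa using h.of_cons.of_cons

theorem of_append {b : Bool} {s s' : List V} (h : AltList A M b (s ++ s')) :
    AltList A M b s := by
  induction s generalizing b with
  | nil => trivial
  | cons a s ih =>
    match b, s, h with
    | _, [], _ => trivial
    | true, _ :: _, h => exact ⟨h.1, ih h.2⟩
    | false, _ :: _, h => exact ⟨h.1, ih h.2⟩

variable [DecidableEq V]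

theorem pairUp_matching : ∀ {s : List V} {u v : V}, AltList A M true s →
    pairUp s u = some v → M u = some v ∨ M v = some u
  | a :: b :: s, u, v, h, huv => by
    rcases pairUp_cons_cons_eq_some huv with ⟨rfl, rfl⟩ | ⟨rfl, rfl⟩ | huv
    · exact .inl h.1
    · exact .inr h.1
    · exact pairUp_matching h.of_cons_cons huv

theorem pairUp_allowed : ∀ {s : List V} {u v : V}, AltList A M false s →
    pairUp s u = some v → A u v ∨ A v u
  | a :: b :: s, u, v, h, huv => by
    rcases pairUp_cons_cons_eq_some huv with ⟨rfl, rfl⟩ | ⟨rfl, rfl⟩ | huv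
    · exact .inl h.1
    · exact .inr h.1
    · exact pairUp_allowed h.of_cons_cons huv

theorem exists_mem_matched {R : Roommates V} {s : List V} {u : V} (h : AltList A M true s)
    (hM : IsMatching R M) (he : Even s.length) (hu : u ∈ s) : ∃ w ∈ s, M u = some w := by
  obtain ⟨w, huw⟩ := exists_pairUp_eq_some he hu
  refine ⟨w, (mem_of_pairUp_eq_some huw).2, ?_⟩
  exact (h.pairUp_matching huw).elim id fun hwu => (hM w u hwu).2

theorem pairUp_or_matching_of_infix : ∀ {s : List V} {x y : V}, AltList A M false s →
    s.Nodup → [x, y] <:+: s → pairUp s x = some y ∨ M x = some y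
  | [], _, _, _, _, hxy => absurd hxy.length_le (by simp)
  | [_], _, _, _, _, hxy => absurd hxy.length_le (by simp)
  | a :: b :: s, x, y, h, hs, hxy => by
    rcases List.infix_cons_iff.mp hxy with hxy | hxy
    · obtain ⟨rfl, rfl⟩ : x = a ∧ y = b := by simpa using hxy
      simp [pairUp]
    rcases List.infix_cons_iff.mp hxy with hxy | hxy
    · obtain ⟨rfl, t, rfl⟩ : x = b ∧ [y] <+: s := by simpa using hxy
      exact .inr h.2.1
    simp only [List.nodup_cons, List.mem_cons, not_or] at hs
    obtain ⟨⟨-, has⟩, hbs, hs⟩ := hs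
    have hx : x ∈ s := hxy.subset (by simp)
    rw [pairUp_cons_cons_of_ne (ne_of_mem_of_not_mem hx has) (ne_of_mem_of_not_mem hx hbs)]
    exact pairUp_or_matching_of_infix h.of_cons_cons hs hxy

theorem pairUp_or_matching_of_infix_cons {s : List V} {a x y : V}
    (h : AltList A M true (a :: s)) (hs : s.Nodup) (hxy : [x, y] <:+: a :: s) :
    pairUp s x = some y ∨ M x = some y := by
  rcases List.infix_cons_iff.mp hxy with hxy | hxy
  · obtain ⟨rfl, t, rfl⟩ : x = a ∧ [y] <+: s := by simpa using hxy
    exact .inr h.1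
  · exact h.of_cons.pairUp_or_matching_of_infix hs hxy

end AltList

theorem Prefers.asymm {R : Roommates V} {M M' : V → Option V} {v : V}
    (h : Prefers R M M' v) : ¬ Prefers R M' M v := by
  rintro (⟨w, hw, hnone⟩ | ⟨w, w', hw, hw', hlt⟩) <;>
    rcases h with ⟨z, hz, hznone⟩ | ⟨z, z', hz, hz', hzlt⟩ <;>
    simp_all only [reduceCtorEq, Option.some.injEq]
  subst_vars
  omega

theorem ncard_prefers_lt [Finite V] {R : Roommates V} {M M' : V → Option V} {x y : V}
    (hM' : IsMatching R M')
    (hwin : ∀ v, Prefers R M M' v → ∃ u, M' v = some u ∧ Prefers R M' M u)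
    (hxy : M' x = some y) (hx : Prefers R M' M x) (hy : Prefers R M' M y) :
    {v | Prefers R M M' v}.ncard < {v | Prefers R M' M v}.ncard := by
  choose! partner hpartner hwins using hwin
  have hinj : Set.InjOn partner {v | Prefers R M M' v} := fun a ha b hb hab => by
    have ha' := (hM' a _ (hpartner a ha)).2
    have hb' := (hM' b _ (hpartner b hb)).2
    rw [hab] at ha'
    exact Option.some.inj (ha'.symm.trans hb')
  have hmaps : ∀ v ∈ {v | Prefers R M M' v}, partner v ∈ {v | Prefers R M' M v} \ {x} := by
    intro v hv
    refine ⟨hwins v hv, fun hvx => ?_⟩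
    have hvy : v = y := Option.some.inj <| (hM' v x (hvx ▸ hpartner v hv)).2.symm.trans hxy
    exact hv.asymm (hvy ▸ hy)
  calc {v | Prefers R M M' v}.ncard ≤ ({v | Prefers R M' M v} \ {x}).ncard :=
        Set.ncard_le_ncard_of_injOn partner hmaps hinj
    _ < {v | Prefers R M' M v}.ncard := Set.ncard_sdiff_singleton_lt_of_mem hx

section Switching

variable [DecidableEq V] {R : Roommates V} {M : V → Option V} {r : List V}

/-- `M ⊕ C` for the alternating cycle `C` whose non-matching edges are the consecutive pairs
of `r`. -/
def switchAlong (M : V → Option V) (r : List V) (u : V) : Option V :=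
  (pairUp r u).or (M u)

theorem switchAlong_of_pairUp {u v : V} (h : pairUp r u = some v) :
    switchAlong M r u = some v := by
  simp [switchAlong, h]

theorem prefers_switchAlong_of_votePlus (hmatched : ∀ u ∈ r, ∃ w ∈ r, M u = some w) {u v : V}
    (huv : pairUp r u = some v) (hvote : VotePlus R M u v) : Prefers R (switchAlong M r) M u := by
  obtain ⟨w, -, hw⟩ := hmatched u (mem_of_pairUp_eq_some huv).1
  exact .inr ⟨v, w, switchAlong_of_pairUp huv, hw, hvote w hw⟩

theorem isMatching_switchAlong (hM : IsMatching R M) (hr : r.Nodup) (he : Even r.length)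
    (hmatched : ∀ u ∈ r, ∃ w ∈ r, M u = some w)
    (hallowed : ∀ u v, pairUp r u = some v → NonMatchEdge R M u v ∨ NonMatchEdge R M v u) :
    IsMatching R (switchAlong M r) := by
  intro a b hab
  cases hpa : pairUp r a with
  | some c =>
    obtain rfl : c = b := by simpa [switchAlong, hpa] using hab
    refine ⟨?_, switchAlong_of_pairUp (pairUp_eq_some_comm hr hpa)⟩
    rcases hallowed a c hpa with h | h
    exacts [h.1, h.1.symm]
  | none =>
    have hMab : M a = some b := by simpa [switchAlong, hpa] using hab
    refine ⟨(hM a b hMab).1, ?_⟩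
    have hb : b ∉ r := fun hb => by
      obtain ⟨w, hw, hbw⟩ := hmatched b hb
      obtain rfl : w = a := Option.some.inj (hbw.symm.trans (hM a b hMab).2)
      obtain ⟨_, hc⟩ := exists_pairUp_eq_some he hw
      simp [hpa] at hc
    have hpb : pairUp r b = none := by
      by_contra hpb
      obtain ⟨c, hc⟩ := Option.ne_none_iff_exists'.mp hpb
      exact hb (mem_of_pairUp_eq_some hc).1
    simpa [switchAlong, hpb] using (hM a b hMab).2

theorem exists_prefers_switchAlong (hr : r.Nodup) (hmatched : ∀ u ∈ r, ∃ w ∈ r, M u = some w)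
    (hallowed : ∀ u v, pairUp r u = some v → NonMatchEdge R M u v ∨ NonMatchEdge R M v u)
    {v : V} (hv : Prefers R M (switchAlong M r) v) :
    ∃ u, switchAlong M r v = some u ∧ Prefers R (switchAlong M r) M u := by
  cases hpv : pairUp r v with
  | none =>
    have hfix : switchAlong M r v = M v := by simp [switchAlong, hpv]
    rcases hv with ⟨w, hw, hnone⟩ | ⟨w, w', hw, hw', hlt⟩
    · simp [hfix, hw] at hnone
    · rw [hfix, hw, Option.some.injEq] at hw'
      exact absurd (hw' ▸ hlt) (lt_irrefl _)
  | some u =>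
    refine ⟨u, switchAlong_of_pairUp hpv,
      prefers_switchAlong_of_votePlus hmatched (pairUp_eq_some_comm hr hpv) ?_⟩
    -- `v` votes `−` for `u`, and edges of `G_M` are not `(−,−)`
    have hv_minus : ¬ VotePlus R M v u := by
      intro hvote
      rcases hv with ⟨w, -, hnone⟩ | ⟨w, w', hw, hw', hlt⟩
      · simp [switchAlong, hpv] at hnone
      · rw [switchAlong_of_pairUp hpv, Option.some.injEq] at hw'
        subst hw'
        exact (hvote w hw).not_gt hlt
    rcases hallowed v u hpv with h | h
    · exact h.2.2.resolve_left hv_minus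
    · exact h.2.2.resolve_right hv_minus

end Switching

theorem popular_no_alt_cycle_with_blocking_general {V : Type*} [Fintype V]
    (R : Roommates V) (M : V → Option V) (hM : IsMatching R M) (hpop : Popular R M)
    (l : List V) (v0 : V) (hhead : l.head? = some v0)
    (hnd : l.Nodup) (heven : Even l.length)
    (halt : AltList (NonMatchEdge R M) M true (l ++ [v0])) :
    ¬ ∃ x y, [x, y] <:+: (l ++ [v0]) ∧ Blocks R M x y := by
  classical
  rintro ⟨x, y, hxy, hblock⟩
  obtain ⟨t, rfl⟩ : ∃ t, l = v0 :: t := ⟨l.tail, List.eq_cons_of_mem_head? hhead⟩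
  -- the non-matching edges of the cycle are the consecutive pairs of `r`
  set r := t ++ [v0]
  have hr : r.Nodup := List.nodup_append_comm.mp hnd
  have hre : Even r.length := by simpa [r] using heven
  have hmatched : ∀ u ∈ r, ∃ w ∈ r, M u = some w := fun u hu => by
    simpa [r, or_comm] using (AltList.of_append halt).exists_mem_matched hM heven
      (by simpa [r, or_comm] using hu)
  have hallowed : ∀ u v, pairUp r u = some v → NonMatchEdge R M u v ∨ NonMatchEdge R M v u :=
    fun _ _ => halt.of_cons.pairUp_allowed
  have hxy' : pairUp r x = some y :=
    (halt.pairUp_or_matching_of_infix_cons hr hxy).resolve_right hblock.2.1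
  have hM' := isMatching_switchAlong hM hr hre hmatched hallowed
  exact (hpop _ hM').not_gt <| ncard_prefers_lt hM'
    (fun _ => exists_prefers_switchAlong hr hmatched hallowed)
    (switchAlong_of_pairUp hxy')
    (prefers_switchAlong_of_votePlus hmatched hxy' hblock.2.2.1)
    (prefers_switchAlong_of_votePlus hmatched (pairUp_eq_some_comm hr hxy') hblock.2.2.2)

/-- if `M` is popular then `G_M` contains no `M`-alternating cycle
containing a `(+,+)` (blocking) edge.  The cycle is presented as a vertex list
`l` of even length with first vertex `v0`, alternating along `l ++ [v0]`,
starting with a matching edge. -/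
theorem popular_no_alt_cycle_with_blocking {V : Type*} [Fintype V]
    (R : Roommates V) (M : V → Option V) (hM : IsMatching R M) (hpop : Popular R M)
    (l : List V) (v0 : V) (hhead : l.head? = some v0)
    (hnd : l.Nodup) (heven : Even l.length) (hlen : 2 ≤ l.length)
    (halt : AltList (NonMatchEdge R M) M true (l ++ [v0])) :
    ¬ ∃ x y, [x, y] <:+: (l ++ [v0]) ∧ Blocks R M x y :=
  popular_no_alt_cycle_with_blocking_general R M hM hpop l v0 hhead hnd heven halt
end

section
/- If a matching M is popular, then G_M contains no M-alternating path that contains a (+,+) edge and has an M-unmatched vertex as an endpoint. -/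
variable {V : Type*}

/-!
Keep the part of the path between the unmatched end and the blocking edge `xy`, inclusive.
It begins and ends with non-matching edges, so these edges pair up all of its vertices.
Switch `M` to this pairing on the path, leaving the old `M`-partner of the end at `xy` single.
Each paired edge lies in `G_M`, so one of its ends prefers the new matching, and both ends of
`xy` do; off the path, only that old partner can prefer `M`. So the new matching wins.
-/

lemma List.exists_eq_append_pair {α : Type*} {l : List α} {a : α} (h : l.getLast? = some a)
    (hl : 2 ≤ l.length) : ∃ r b, l = r ++ [b, a] := by
  rw [← List.head?_reverse] at h
  rw [← List.length_reverse] at hl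
  match hrev : l.reverse, h, hl with
  | a' :: b :: r, h, _ =>
    obtain rfl : a' = a := Option.some.inj h
    exact ⟨r.reverse, b, by simpa using congrArg List.reverse hrev⟩
  | [], _, hl | [_], _, hl => simp at hl

section AltList

variable {A : V → V → Prop} {M : V → Option V}

lemma altList_nil (b : Bool) : AltList A M b [] := by
  cases b <;> trivial

lemma altList_singleton (b : Bool) (u : V) : AltList A M b [u] := by
  cases b <;> trivial

lemma AltList.tail {b : Bool} {u : V} {l : List V} (h : AltList A M b (u :: l)) :
    AltList A M (!b) l := by
  cases l with
  | nil => exact altList_nil _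
  | cons w r => cases b <;> exact h.2

lemma AltList.of_cons_cons_s5 {u w : V} {r : List V} (h : AltList A M false (u :: w :: r)) :
    AltList A M false r :=
  h.tail.tail

lemma AltList.of_append_left {b : Bool} {l₁ l₂ : List V} (h : AltList A M b (l₁ ++ l₂)) :
    AltList A M b l₁ := by
  induction l₁ generalizing b with
  | nil => exact altList_nil b
  | cons u l₁ ih =>
    cases l₁ with
    | nil => exact altList_singleton b u
    | cons w r => cases b <;> exact ⟨h.1, ih h.2⟩

lemma AltList.exists_of_append_right {b : Bool} {l₁ l₂ : List V}
    (h : AltList A M b (l₁ ++ l₂)) : ∃ b', AltList A M b' l₂ := by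
  induction l₁ generalizing b with
  | nil => exact ⟨b, h⟩
  | cons u l₁ ih => exact ih h.tail

lemma AltList.false_of_head_unmatched {b : Bool} {l : List V} {v : V}
    (h : AltList A M b l) (hv : l.head? = some v) (hunm : M v = none) :
    AltList A M false l := by
  rcases b with _ | _
  · exact h
  rcases l with _ | ⟨u, _ | ⟨w, r⟩⟩
  · exact altList_nil false
  · exact altList_singleton false u
  · obtain rfl : u = v := Option.some.inj hv
    exact absurd h.1 (by simp [hunm])

lemma AltList.eq_false_of_not_matched {b : Bool} {v w : V} {r : List V}
    (h : AltList A M b (v :: w :: r)) (hvw : M v ≠ some w) : b = false := by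
  cases b
  · rfl
  · exact absurd h.1 hvw

theorem AltList.even_length_of_not_matched :
    ∀ {s : List V} {u w : V}, AltList A M false (s ++ [u, w]) → M u ≠ some w → Even s.length
  | [], _, _, _, _ => Even.zero
  | [_], _, _, h, huw => absurd h.2.1 huw
  | _ :: _ :: s, _, _, h, huw => by
    simpa [Nat.even_add_one, parity_simps] using h.of_cons_cons_s5.even_length_of_not_matched huw

theorem AltList.even_length_of_getLast_unmatched (hM : ∀ u w, M u = some w → M w = some u)
    {l : List V} {v : V} (h : AltList A M false l) (hl : 2 ≤ l.length)
    (hv : l.getLast? = some v) (hunm : M v = none) : Even l.length := by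
  obtain ⟨r, u, rfl⟩ := List.exists_eq_append_pair hv hl
  have := h.even_length_of_not_matched fun huv => by simpa [hunm] using hM u v huv
  simpa [parity_simps] using this

theorem AltList.head_or_getLast_of_partner_not_mem (hM : ∀ u w, M u = some w → M w = some u) :
    ∀ {l : List V} {w z : V}, AltList A M false l → w ∈ l → M w = some z → z ∉ l →
      l.head? = some w ∨ l.getLast? = some w
  | [_], _, _, _, hw, _, _ => by simp_all
  | a :: c :: r, w, z, h, hw, hz, hzl => by
    rcases List.mem_cons.1 hw with rfl | hw
    · exact Or.inl rfl
    rcases List.mem_cons.1 hw with rfl | hwr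
    · cases r with
      | nil => exact Or.inr rfl
      | cons d r =>
        obtain rfl : z = d := Option.some.inj (hz.symm.trans h.2.1)
        simp at hzl
    rcases (h.of_cons_cons_s5).head_or_getLast_of_partner_not_mem hM hwr hz
      (fun hzr => hzl (by simp [hzr])) with hhead | hlast
    · cases r with
      | nil => simp at hhead
      | cons d r =>
        obtain rfl : d = w := Option.some.inj hhead
        obtain rfl : z = c := Option.some.inj (hz.symm.trans (hM _ _ h.2.1))
        simp at hzl
    · cases r with
      | nil => simp at hlast
      | cons d r => exact Or.inr (by simpa using hlast)

end AltList

section PathPartner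

variable [DecidableEq V]

/-- Pairs the vertices of a path as `l[0]–l[1], l[2]–l[3], …`; an odd last vertex is unpaired. -/
def pathPartner : List V → V → Option V
  | u :: w :: rest, v => if v = u then some w else if v = w then some u else pathPartner rest v
  | _, _ => none

theorem mem_of_pathPartner_eq_some :
    ∀ {l : List V} {v w : V}, pathPartner l v = some w → v ∈ l ∧ w ∈ l
  | a :: c :: r, v, w, h => by
    unfold pathPartner at h
    split_ifs at h with hva hvc
    · cases h; simp [hva]
    · cases h; simp [hvc]
    · have := mem_of_pathPartner_eq_some h
      simp [this]

theorem pathPartner_eq_none_iff :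
    ∀ {l : List V} {v : V}, Even l.length → (pathPartner l v = none ↔ v ∉ l)
  | [], _, _ => by simp [pathPartner]
  | [_], _, h => by simp at h
  | a :: c :: r, v, h => by
    have hr : Even r.length := by simpa [Nat.even_add_one, parity_simps] using h
    unfold pathPartner
    split_ifs with hva hvc
    · simp [hva]
    · simp [hvc]
    · simp [hva, hvc, pathPartner_eq_none_iff hr]

theorem pathPartner_symm :
    ∀ {l : List V} {v w : V}, l.Nodup → pathPartner l v = some w → pathPartner l w = some v
  | a :: c :: r, v, w, hnd, h => by
    simp only [List.nodup_cons, List.mem_cons, not_or] at hnd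
    unfold pathPartner at h ⊢
    split_ifs at h with hva hvc
    · cases h; simp [hva, Ne.symm hnd.1.1]
    · cases h; simp [hvc]
    · have hwr := (mem_of_pathPartner_eq_some h).2
      have hwa : w ≠ a := fun hwa => hnd.1.2 (hwa ▸ hwr)
      have hwc : w ≠ c := fun hwc => hnd.2.1 (hwc ▸ hwr)
      simp [hwa, hwc, pathPartner_symm hnd.2.2 h]

theorem pathPartner_append {v w : V} (t : List V) :
    ∀ {s : List V}, v ∉ s → Even s.length → pathPartner (s ++ v :: w :: t) v = some w
  | [], _, _ => by simp [pathPartner]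
  | [_], _, h => by simp at h
  | a :: c :: s, hv, h => by
    simp only [List.mem_cons, not_or] at hv
    have hs : Even s.length := by simpa [Nat.even_add_one, parity_simps] using h
    simp [pathPartner, hv.1, hv.2.1, pathPartner_append t hv.2.2 hs]

variable {A : V → V → Prop} {M : V → Option V}

theorem AltList.rel_of_pathPartner :
    ∀ {l : List V} {v w : V}, AltList A M false l → pathPartner l v = some w → A v w ∨ A w v
  | a :: c :: r, v, w, halt, h => by
    unfold pathPartner at h
    split_ifs at h with hva hvc
    · cases h; exact Or.inl (hva ▸ halt.1)
    · cases h; exact Or.inr (hvc ▸ halt.1)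
    · exact halt.of_cons_cons_s5.rel_of_pathPartner h

end PathPartner

section Switching

variable {R : Roommates V} {M σ : V → Option V}

lemma prefers_asymm {M₁ M₂ : V → Option V} {v : V} (h₁ : Prefers R M₁ M₂ v)
    (h₂ : Prefers R M₂ M₁ v) : False := by
  rcases h₁ with ⟨w, hw, hnone⟩ | ⟨w, w', hw, hw', hr⟩ <;>
    rcases h₂ with ⟨z, hz, hznone⟩ | ⟨z, z', hz, hz', hr'⟩ <;>
    simp_all
  omega

lemma nonMatchEdge_symm (hM : IsMatching R M) {u w : V} (h : NonMatchEdge R M u w) :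
    NonMatchEdge R M w u :=
  ⟨h.1.symm, fun hwu => h.2.1 (hM _ _ hwu).2, h.2.2.symm⟩

lemma blocks_symm (hM : IsMatching R M) {u w : V} (h : Blocks R M u w) : Blocks R M w u :=
  ⟨h.1.symm, fun hwu => h.2.1 (hM _ _ hwu).2, h.2.2.2, h.2.2.1⟩

lemma not_prefers_of_apply_eq {M₁ M₂ : V → Option V} {v : V} (h : M₁ v = M₂ v) :
    ¬ Prefers R M₁ M₂ v := by
  rintro (⟨w, hw, hnone⟩ | ⟨w, w', hw, hw', hr⟩)
  · simp_all
  · rw [h, hw'] at hw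
    cases hw
    exact lt_irrefl _ hr

/-- Vertices covered by `σ` take their `σ`-partner; an `M`-edge survives only if neither of its
ends is covered. -/
def switch (σ M : V → Option V) (u : V) : Option V :=
  (σ u).or ((M u).filter fun z => (σ z).isNone)

lemma switch_of_eq_some {u w : V} (h : σ u = some w) : switch σ M u = some w := by
  simp [switch, h]

lemma switch_of_uncovered {u : V} (hu : σ u = none) (hM : ∀ z, M u = some z → σ z = none) :
    switch σ M u = M u := by
  rcases h : M u with _ | z
  · simp [switch, hu, h]
  · simp [switch, hu, h, hM z h]

lemma isMatching_switch (hM : IsMatching R M) (hsymm : ∀ u w, σ u = some w → σ w = some u)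
    (hadj : ∀ u w, σ u = some w → R.G.Adj u w) : IsMatching R (switch σ M) := by
  intro u w h
  rcases hu : σ u with _ | w'
  · obtain ⟨hMu, hw⟩ : M u = some w ∧ σ w = none := by
      simpa [switch, hu, Option.filter_eq_some_iff] using h
    refine ⟨(hM u w hMu).1, ?_⟩
    simp [switch, hw, (hM u w hMu).2, hu]
  · obtain rfl : w' = w := by simpa [switch, hu] using h
    exact ⟨hadj u w' hu, switch_of_eq_some (hsymm u w' hu)⟩

lemma prefers_switch_of_votePlus {u w : V} (h : σ u = some w) (hv : VotePlus R M u w) :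
    Prefers R (switch σ M) M u := by
  rcases hu : M u with _ | z
  · exact Or.inl ⟨w, switch_of_eq_some h, hu⟩
  · exact Or.inr ⟨w, z, switch_of_eq_some h, hu, hv z hu⟩

lemma exists_covered_partner_of_prefers {q : V} (hq : σ q = none)
    (hpref : Prefers R M (switch σ M) q) : ∃ z, M q = some z ∧ σ z ≠ none := by
  by_contra! h
  exact not_prefers_of_apply_eq (switch_of_uncovered hq h).symm hpref

/-- Voters for `M` inject into voters for `switch σ M` other than `y`: a covered voter goes to
its `σ`-partner, and the only possible uncovered one, the `M`-partner of `y`, goes to `x`. -/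
theorem not_popular_of_switching [Fintype V] (hM : IsMatching R M)
    (hsymm : ∀ u w, σ u = some w → σ w = some u)
    (hedge : ∀ u w, σ u = some w → NonMatchEdge R M u w)
    {x y : V} (hxy : σ x = some y) (hblock : Blocks R M x y)
    (hexit : ∀ w z, σ w ≠ none → M w = some z → σ z = none → w = y) :
    ¬ Popular R M := by
  intro hpop
  set P := {v | Prefers R (switch σ M) M v}
  set Q := {v | Prefers R M (switch σ M) v}
  have hPQ : ∀ q ∈ Q, q ∉ P := fun q hq hp => prefers_asymm hp hq
  have hxP : x ∈ P := prefers_switch_of_votePlus hxy hblock.2.2.1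
  have hyP : y ∈ P := prefers_switch_of_votePlus (hsymm _ _ hxy) hblock.2.2.2
  have hcovered : ∀ q ∈ Q, ∀ w, σ q = some w → w ∈ P := by
    intro q hq w hw
    rcases (hedge q w hw).2.2 with hv | hv
    · exact absurd (prefers_switch_of_votePlus hw hv) (hPQ q hq)
    · exact prefers_switch_of_votePlus (hsymm q w hw) hv
  have huncovered : ∀ q ∈ Q, σ q = none → M q = some y := by
    intro q hq hσq
    obtain ⟨z, hz, hσz⟩ := exists_covered_partner_of_prefers hσq hq
    rwa [← hexit z q hσz (hM q z hz).2 hσq]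
  have hmaps : ∀ q ∈ Q, (σ q).getD x ∈ P \ {y} := by
    intro q hq
    rcases hσq : σ q with _ | w
    · exact ⟨hxP, hblock.1.ne⟩
    · refine ⟨hcovered q hq w hσq, fun (hwy : w = y) => hPQ q hq ?_⟩
      obtain rfl : x = q := Option.some.inj ((hsymm x y hxy).symm.trans (hsymm q y (hwy ▸ hσq)))
      exact hxP
  have hinj : Set.InjOn (fun q => (σ q).getD x) Q := by
    have hnot_x : ∀ q ∈ Q, σ q ≠ some x := fun q hq hqx => by
      obtain rfl : y = q := Option.some.inj (hxy.symm.trans (hsymm q x hqx))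
      exact hPQ y hq hyP
    intro q₁ hq₁ q₂ hq₂ heq
    rcases h₁ : σ q₁ with _ | w₁ <;> rcases h₂ : σ q₂ with _ | w₂ <;>
      simp only [h₁, h₂, Option.getD_none, Option.getD_some] at heq
    · exact Option.some.inj
        ((hM _ _ (huncovered q₁ hq₁ h₁)).2.symm.trans (hM _ _ (huncovered q₂ hq₂ h₂)).2)
    · exact absurd (heq ▸ h₂) (hnot_x q₂ hq₂)
    · exact absurd (heq ▸ h₁) (hnot_x q₁ hq₁)
    · exact Option.some.inj ((hsymm q₁ w₁ h₁).symm.trans (heq ▸ hsymm q₂ w₂ h₂))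
  have hQP : Q.ncard < P.ncard :=
    (Set.ncard_le_ncard_of_injOn _ hmaps hinj).trans_lt (Set.ncard_sdiff_singleton_lt_of_mem hyP)
  exact (hpop _ (isMatching_switch hM hsymm fun u w h => (hedge u w h).1)).not_gt hQP

end Switching

theorem not_popular_of_altList [Fintype V] [DecidableEq V] {R : Roommates V} {M : V → Option V}
    (hM : IsMatching R M) {l : List V} (halt : AltList (NonMatchEdge R M) M false l)
    (hnd : l.Nodup) (heven : Even l.length) {x y : V} (hxy : pathPartner l x = some y)
    (hblock : Blocks R M x y)
    (hends : ∀ w, l.head? = some w ∨ l.getLast? = some w → M w = none ∨ w = y) :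
    ¬ Popular R M := by
  refine not_popular_of_switching hM (fun _ _ => pathPartner_symm hnd)
    (fun u w h => (halt.rel_of_pathPartner h).elim id (nonMatchEdge_symm hM)) hxy hblock ?_
  intro w z hw hz hz'
  obtain ⟨w', hw'⟩ := Option.ne_none_iff_exists'.1 hw
  have hwl : w ∈ l := (mem_of_pathPartner_eq_some hw').1
  have hzl : z ∉ l := (pathPartner_eq_none_iff heven).1 hz'
  rcases hends w (halt.head_or_getLast_of_partner_not_mem (fun u w h => (hM u w h).2) hwl hz hzl)
    with hunm | rfl
  · simp [hunm] at hz
  · rfl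

/-- if `M` is popular then `G_M` contains no `M`-alternating path
that contains a `(+,+)` (blocking) edge and ends at an `M`-unmatched vertex. -/
theorem popular_no_alt_path_blocking_unmatched_end {V : Type*} [Fintype V]
    (R : Roommates V) (M : V → Option V) (hM : IsMatching R M) (hpop : Popular R M)
    (l : List V) (b : Bool) (hnd : l.Nodup)
    (halt : AltList (NonMatchEdge R M) M b l)
    (x y : V) (hinfix : [x, y] <:+: l) (hblock : Blocks R M x y)
    (v : V) (hend : l.head? = some v ∨ l.getLast? = some v) (hunm : M v = none) :
    False := by
  classical
  obtain ⟨s, t, rfl⟩ := hinfix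
  rcases hend with hhead | hlast
  · have halt' : AltList (NonMatchEdge R M) M false (s ++ [x, y]) :=
      (halt.false_of_head_unmatched hhead hunm).of_append_left
    have heven : Even s.length := halt'.even_length_of_not_matched hblock.2.1
    have hx : x ∉ s := by simpa using (List.nodup_append.1 hnd.of_append_left).2.2 x
    refine not_popular_of_altList hM halt' hnd.of_append_left
      (by simpa [parity_simps] using heven) (pathPartner_append [] hx heven) hblock
      (fun w hw => ?_) hpop
    rw [← List.head?_append_of_ne_nil _ (by simp : s ++ [x, y] ≠ [])] at hw
    rcases hw with hw | hw
    · exact Or.inl (Option.some.inj (hhead.symm.trans hw) ▸ hunm)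
    · exact Or.inr (by simpa [eq_comm] using hw)
  · rw [show s ++ [x, y] ++ t = s ++ x :: y :: t by simp] at hnd halt hlast
    rw [List.getLast?_append_of_ne_nil _ (by simp)] at hlast
    obtain ⟨b', halt'⟩ := halt.exists_of_append_right
    obtain rfl := halt'.eq_false_of_not_matched hblock.2.1
    refine not_popular_of_altList hM halt' hnd.of_append_right
      (halt'.even_length_of_getLast_unmatched (fun u w h => (hM u w h).2) (by simp) hlast hunm)
      (pathPartner_symm hnd.of_append_right (by simp [pathPartner])) (blocks_symm hM hblock)
      (fun w hw => ?_) hpop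
    rcases hw with hw | hw
    · exact Or.inr (Option.some.inj hw).symm
    · exact Or.inl (Option.some.inj (hlast.symm.trans hw) ▸ hunm)
end

section
/- A matching M in a roommates instance G is popular if and only if M (together with loops on M-unmatched vertices) is a maximum weight perfect matching in the auxiliary weighted graph obtained by adding a loop at each vertex and assigning weight −1 to loops at M-covered vertices, 0 to loops at M-uncovered vertices, weight 2 to (+,+) edges, −2 to (−,−) edges, and 0 to all other edges. -/
variable {V : Type*}

open Classical in
/-- Contribution of vertex `v` to the auxiliary weight of the perfect matching
corresponding to `M'` (loops at `M'`-uncovered vertices): a loop weighs `-1`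
at an `M`-covered vertex and `0` at an `M`-uncovered one, and each edge of `M'`
contributes the votes of its two endpoints (`2` for `(+,+)`, `-2` for `(−,−)`,
`0` otherwise, matching edges of `M` weigh `0`). -/
noncomputable def contrib (R : Roommates V) (M M' : V → Option V) (v : V) : ℤ :=
  match M' v with
  | none => if M v = none then 0 else -1
  | some w => if M v = some w then 0 else if VotePlus R M v w then 1 else -1

/-- Total weight, in the auxiliary graph built from `M`, of the perfect matching
corresponding to the matching `M'` together with loops at its uncovered vertices. -/
noncomputable def auxWeight [Fintype V] (R : Roommates V) (M M' : V → Option V) : ℤ :=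
  ∑ v, contrib R M M' v

open Classical in
lemma contrib_self (R : Roommates V) (M : V → Option V) (v : V) :
    contrib R M M v = 0 := by
  cases h : M v <;> simp [contrib, h]

open Classical in
lemma contrib_eq (R : Roommates V) {M M' : V → Option V}
    (hM : IsMatching R M) (hM' : IsMatching R M') (v : V) :
    contrib R M M' v =
      (if Prefers R M' M v then (1:ℤ) else 0) -
      (if Prefers R M M' v then (1:ℤ) else 0) := by
  cases h' : M' v with
  | none =>
    cases h : M v with
    | none =>
      have hnp1 : ¬ Prefers R M' M v := by
        rintro (⟨w, hw, _⟩ | ⟨w, w', hw, _, _⟩) <;> simp [h'] at hw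
      have hnp2 : ¬ Prefers R M M' v := by
        rintro (⟨w, hw, _⟩ | ⟨w, w', hw, _, _⟩) <;> simp [h] at hw
      simp [contrib, h, h', hnp1, hnp2]
    | some u =>
      have hp : Prefers R M M' v := Or.inl ⟨u, h, h'⟩
      have hnp : ¬ Prefers R M' M v := by
        rintro (⟨w, hw, _⟩ | ⟨w, w', hw, _, _⟩) <;> simp [h'] at hw
      simp [contrib, h, h', hp, hnp]
  | some w =>
    by_cases hm : M v = some w
    · have hnp1 : ¬ Prefers R M' M v := by
        rintro (⟨a, ha, hb⟩ | ⟨a, b, ha, hb, hc⟩)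
        · simp [hm] at hb
        · rw [h'] at ha; rw [hm] at hb
          cases ha; cases hb; exact lt_irrefl _ hc
      have hnp2 : ¬ Prefers R M M' v := by
        rintro (⟨a, ha, hb⟩ | ⟨a, b, ha, hb, hc⟩)
        · simp [h'] at hb
        · rw [hm] at ha; rw [h'] at hb
          cases ha; cases hb; exact lt_irrefl _ hc
      simp [contrib, h', hm, hnp1, hnp2]
    · cases h : M v with
      | none =>
        have hvp : VotePlus R M v w := fun u hu => by simp [h] at hu
        have hp : Prefers R M' M v := Or.inl ⟨w, h', h⟩
        have hnp : ¬ Prefers R M M' v := by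
          rintro (⟨a, ha, _⟩ | ⟨a, b, ha, _, _⟩) <;> simp [h] at ha
        simp [contrib, h', hm, hvp, hp, hnp]
      | some u =>
        have hadj1 := (hM' v w h').1
        have hadj2 := (hM v u h).1
        have hne : w ≠ u := by rintro rfl; exact hm h
        by_cases hr : R.rank v w < R.rank v u
        · have hvp : VotePlus R M v w := fun a ha => by
            rw [h] at ha; cases ha; exact hr
          have hp : Prefers R M' M v := Or.inr ⟨w, u, h', h, hr⟩
          have hnp : ¬ Prefers R M M' v := by
            rintro (⟨a, ha, hb⟩ | ⟨a, b, ha, hb, hc⟩)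
            · simp [h'] at hb
            · rw [h] at ha; rw [h'] at hb; cases ha; cases hb
              exact absurd hr (not_lt.2 hc.le)
          simp [contrib, h', hm, hvp, hp, hnp]
        · have hru : R.rank v u < R.rank v w := by
            rcases lt_or_eq_of_le (not_lt.1 hr) with h1 | h1
            · exact h1
            · exact absurd (R.rank_inj v u w hadj2 hadj1 h1) (Ne.symm hne)
          have hnvp : ¬ VotePlus R M v w := fun hv => hr (hv u h)
          have hp : Prefers R M M' v := Or.inr ⟨u, w, h, h', hru⟩
          have hnp : ¬ Prefers R M' M v := by
            rintro (⟨a, ha, hb⟩ | ⟨a, b, ha, hb, hc⟩)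
            · simp [h] at hb
            · rw [h'] at ha; rw [h] at hb; cases ha; cases hb
              exact absurd hru (not_lt.2 hc.le)
          simp [contrib, h', hm, hnvp, hp, hnp]

open Classical in
lemma auxWeight_eq {V : Type*} [Fintype V] (R : Roommates V) {M M' : V → Option V}
    (hM : IsMatching R M) (hM' : IsMatching R M') :
    auxWeight R M M' =
      ({v | Prefers R M' M v}.ncard : ℤ) - ({v | Prefers R M M' v}.ncard : ℤ) := by
  classical
  unfold auxWeight
  rw [Finset.sum_congr rfl (fun v _ => contrib_eq R hM hM' v),
    Finset.sum_sub_distrib, Finset.sum_boole, Finset.sum_boole]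
  have h1 : {v | Prefers R M' M v}.ncard =
      (Finset.univ.filter fun v => Prefers R M' M v).card := by
    rw [Set.ncard_eq_toFinset_card']; congr 1; ext v; simp
  have h2 : {v | Prefers R M M' v}.ncard =
      (Finset.univ.filter fun v => Prefers R M M' v).card := by
    rw [Set.ncard_eq_toFinset_card']; congr 1; ext v; simp
  rw [h1, h2]

/-- `M` is popular iff `M` (with loops at its uncovered vertices)
is a maximum weight perfect matching of the auxiliary weighted graph. -/
theorem popular_iff_max_weight {V : Type*} [Fintype V]
    (R : Roommates V) (M : V → Option V) (hM : IsMatching R M) :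
    Popular R M ↔ ∀ M', IsMatching R M' → auxWeight R M M' ≤ auxWeight R M M := by
  have haux0 : auxWeight R M M = 0 := by
    unfold auxWeight
    exact Finset.sum_eq_zero fun v _ => contrib_self R M v
  constructor
  · intro h M' hM'
    rw [auxWeight_eq R hM hM', haux0]
    exact sub_nonpos.2 (by exact_mod_cast h M' hM')
  · intro h M' hM'
    have := h M' hM'
    rw [auxWeight_eq R hM hM', haux0] at this
    exact_mod_cast sub_nonpos.1 this
end

section
/- (Corollary 3) Let P be a popular matching in a roommates instance G that leaves exactly the vertex set U uncovered, and Z = V ∖ N(U) ∖ U. Then every edge blocking P connects two vertices each of which is matched by P to a vertex of Z. -/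
variable {V : Type*}

/-! A popular matching admits no switch along a short alternating path that wins more votes
than it loses. If an endpoint `u` of a blocking edge `uv` were single, trading `v`'s pair for
`uv` wins `u` and `v` and loses at most `v`'s old partner. If `u` is matched to `a` and `a` is
adjacent to a single vertex `x`, trading the pairs `ua` and `vb` for `uv` and `ax` wins `u`, `v`,
`x` and loses at most `a` and `b`. So the partner of each endpoint is matched and has no single
neighbour, i.e. lies in `Z`. -/

section Switching

open Classical

variable {R : Roommates V} {M P : V → Option V} {u v w : V}

theorem not_prefers_of_eq (h : M w = P w) : ¬ Prefers R M P w := by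
  rintro (⟨a, hM, hP⟩ | ⟨a, b, hM, hP, hlt⟩) <;> simp_all

theorem not_prefers_of_prefers (h : Prefers R M P w) : ¬ Prefers R P M w := by
  rcases h with ⟨a, hM, hP⟩ | ⟨a, b, hM, hP, hlt⟩ <;>
    rintro (⟨c, hP', hM'⟩ | ⟨c, d, hP', hM', hlt'⟩) <;> simp_all [lt_asymm]

theorem prefers_of_forall_rank_lt (hM : M w = some v)
    (hlt : ∀ a, P w = some a → R.rank w v < R.rank w a) : Prefers R M P w := by
  cases hP : P w with
  | none => exact Or.inl ⟨v, hM, hP⟩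
  | some a => exact Or.inr ⟨v, a, hM, hP, hlt a hP⟩

noncomputable def unmatch (M : V → Option V) (u : V) : V → Option V :=
  fun w => if w = u ∨ M w = some u then none else M w

/-- Meaningful only when `u ≠ v` are both single in `M`. -/
noncomputable def addPair (M : V → Option V) (u v : V) : V → Option V :=
  Function.update (Function.update M u (some v)) v (some u)

theorem IsMatching.unmatch (hM : IsMatching R M) (u : V) : IsMatching R (unmatch M u) := by
  intro p q hpq
  simp only [_root_.unmatch] at hpq ⊢
  split_ifs at hpq with hp
  obtain ⟨hadj, hq⟩ := hM p q hpq
  refine ⟨hadj, ?_⟩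
  have hqu : q ≠ u := by rintro rfl; exact hp (Or.inr hpq)
  have hpu : p ≠ u := fun h => hp (Or.inl h)
  simp [hqu, hq, hpu]

theorem IsMatching.addPair (hM : IsMatching R M) (hadj : R.G.Adj u v)
    (hu : M u = none) (hv : M v = none) : IsMatching R (addPair M u v) := by
  have huv : u ≠ v := hadj.ne
  intro p q hpq
  by_cases hpv : p = v
  · subst hpv
    simp only [_root_.addPair, Function.update_self, Option.some.injEq] at hpq
    subst hpq
    simp [_root_.addPair, huv, hadj.symm]
  by_cases hpu : p = u
  · subst hpu
    simp [_root_.addPair, huv] at hpq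
    subst hpq
    simp [_root_.addPair, hadj]
  simp only [_root_.addPair, Function.update_of_ne hpv, Function.update_of_ne hpu] at hpq
  obtain ⟨hadj', hq⟩ := hM p q hpq
  have hqu : q ≠ u := by rintro rfl; simp [hu] at hq
  have hqv : q ≠ v := by rintro rfl; simp [hv] at hq
  simp [_root_.addPair, hadj', hqu, hqv, hq]

@[simp] theorem addPair_apply_left (huv : u ≠ v) : addPair M u v u = some v := by
  simp [addPair, huv]

@[simp] theorem addPair_apply_right : addPair M u v v = some u := by
  simp [addPair]

theorem addPair_apply_of_ne (hu : w ≠ u) (hv : w ≠ v) : addPair M u v w = M w := by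
  simp [addPair, hu, hv]

theorem IsMatching.eq_of_partner {a : V} (hM : IsMatching R M) (hw : M w = some u)
    (hu : M u = some a) : w = a :=
  Option.some_injective _ ((hM w u hw).2.symm.trans hu)

theorem Blocks.symm (hP : IsMatching R P) (h : Blocks R P u v) : Blocks R P v u := by
  obtain ⟨hadj, hne, hu, hv⟩ := h
  exact ⟨hadj.symm, fun h => hne (hP v u h).2, hv, hu⟩

variable [Fintype V]

/-- A vertex votes for `P` only if its partner changes, and then it is not in `S`. -/
theorem Popular.ncard_le_of_switch (hpop : Popular R P) (hM : IsMatching R M) {S T : Set V}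
    (hS : ∀ w ∈ S, Prefers R M P w) (hST : ∀ w, M w ≠ P w → w ∈ S ∨ w ∈ T) :
    S.ncard ≤ T.ncard :=
  calc S.ncard ≤ {w | Prefers R M P w}.ncard := Set.ncard_le_ncard hS
    _ ≤ {w | Prefers R P M w}.ncard := hpop M hM
    _ ≤ T.ncard := Set.ncard_le_ncard fun w hw =>
        (hST w fun h => not_prefers_of_eq h.symm hw).resolve_left fun hwS =>
          not_prefers_of_prefers (hS w hwS) hw

theorem Popular.ne_none_of_blocks (hP : IsMatching R P) (hpop : Popular R P)
    (hb : Blocks R P u v) : P u ≠ none := by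
  intro hu
  obtain ⟨hadj, -, -, hv⟩ := hb
  have huv : u ≠ v := hadj.ne
  have hM : IsMatching R (addPair (unmatch P v) u v) :=
    (hP.unmatch v).addPair hadj (by simp [unmatch, hu]) (by simp [unmatch])
  have hle := hpop.ncard_le_of_switch hM (S := {u, v}) (T := {w | P v = some w}) ?_ ?_
  · have hT : {w | P v = some w}.ncard ≤ 1 := Set.ncard_le_one_iff_subsingleton.mpr
      fun a ha b hb => Option.some_injective _ (ha.symm.trans hb)
    rw [Set.ncard_pair huv] at hle
    omega
  · rintro w (rfl | rfl)
    · exact prefers_of_forall_rank_lt (addPair_apply_left huv) (by simp [hu])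
    · exact prefers_of_forall_rank_lt addPair_apply_right hv
  · intro w hw
    by_contra! h
    simp only [Set.mem_insert_iff, Set.mem_singleton_iff, not_or] at h
    obtain ⟨⟨hwu, hwv⟩, hvw⟩ := h
    refine hw ?_
    rw [addPair_apply_of_ne hwu hwv]
    have hwv' : P w ≠ some v := fun h => hvw (hP w v h).2
    simp [unmatch, hwv, hwv']

theorem Popular.partner_not_adj_single_of_blocks (hP : IsMatching R P) (hpop : Popular R P)
    (hb : Blocks R P u v) {a x : V} (ha : P u = some a) (hx : P x = none) :
    ¬ R.G.Adj a x := by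
  intro hax
  obtain ⟨b, hb'⟩ := Option.ne_none_iff_exists'.mp (hpop.ne_none_of_blocks hP (hb.symm hP))
  obtain ⟨hadj, -, hu, hv⟩ := hb
  have huv : u ≠ v := hadj.ne
  have hau : a ≠ u := (hP u a ha).1.ne'
  have hav : a ≠ v := by rintro rfl; exact (hu a ha).false
  have hxu : x ≠ u := by rintro rfl; simp [ha] at hx
  have hxv : x ≠ v := by rintro rfl; simp [hb'] at hx
  have hxa : x ≠ a := hax.ne'
  have hN : IsMatching R (addPair (unmatch (unmatch P u) v) u v) :=
    ((hP.unmatch u).unmatch v).addPair hadj (by simp [unmatch]) (by simp [unmatch])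
  have hM : IsMatching R (addPair (addPair (unmatch (unmatch P u) v) u v) a x) :=
    hN.addPair hax (by rw [addPair_apply_of_ne hau hav]; simp [unmatch, (hP u a ha).2])
      (by rw [addPair_apply_of_ne hxu hxv]; simp [unmatch, hx])
  have hle := hpop.ncard_le_of_switch hM (S := {u, v, x}) (T := {a, b}) ?_ ?_
  · have hS : ({u, v, x} : Set V).ncard = 3 :=
      Set.ncard_eq_three.mpr ⟨u, v, x, huv, hxu.symm, hxv.symm, rfl⟩
    have hT : ({a, b} : Set V).ncard ≤ 2 := (Set.ncard_insert_le a {b}).trans (by simp)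
    omega
  · rintro w (rfl | rfl | rfl)
    · refine prefers_of_forall_rank_lt ?_ hu
      rw [addPair_apply_of_ne hau.symm hxu.symm, addPair_apply_left huv]
    · refine prefers_of_forall_rank_lt ?_ hv
      rw [addPair_apply_of_ne hav.symm hxv.symm, addPair_apply_right]
    · exact prefers_of_forall_rank_lt addPair_apply_right (by simp [hx])
  · intro w hw
    by_contra! h
    simp only [Set.mem_insert_iff, Set.mem_singleton_iff, not_or] at h
    obtain ⟨⟨hwu, hwv, hwx⟩, hwa, hwb⟩ := h
    refine hw ?_
    rw [addPair_apply_of_ne hwa hwx, addPair_apply_of_ne hwu hwv]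
    have hwu' : P w ≠ some u := fun h => hwa (hP.eq_of_partner h ha)
    have hwv' : P w ≠ some v := fun h => hwb (hP.eq_of_partner h hb')
    simp [unmatch, hwu, hwv, hwu', hwv']

theorem Popular.exists_partner_notMem_closedNbhd_of_blocks (hP : IsMatching R P)
    (hpop : Popular R P) {U : Set V} (hU : ∀ v, P v = none ↔ v ∈ U) (hb : Blocks R P u v) :
    ∃ a, P u = some a ∧ a ∉ U ∧ ∀ x ∈ U, ¬ R.G.Adj a x := by
  obtain ⟨a, ha⟩ := Option.ne_none_iff_exists'.mp (hpop.ne_none_of_blocks hP hb)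
  have haU : a ∉ U := fun haU => by simpa [(hP u a ha).2] using (hU a).2 haU
  exact ⟨a, ha, haU, fun x hx => hpop.partner_not_adj_single_of_blocks hP hb ha ((hU x).2 hx)⟩

end Switching

/-- Corollary 3: if `P` is a popular matching leaving exactly `U`
uncovered and `Z = V ∖ N(U) ∖ U`, then every edge blocking `P` connects two
vertices that `P` matches to vertices of `Z`. -/
theorem corollary3 {V : Type*} [Fintype V] (R : Roommates V)
    (P : V → Option V) (hP : IsMatching R P) (hpop : Popular R P)
    (U : Set V) (hU : ∀ v, P v = none ↔ v ∈ U)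
    (Z : Set V) (hZ : Z = {w | w ∉ U ∧ ∀ x ∈ U, ¬ R.G.Adj w x})
    (u v : V) (hblock : Blocks R P u v) :
    (∃ zu, P u = some zu ∧ zu ∈ Z) ∧ (∃ zv, P v = some zv ∧ zv ∈ Z) := by
  subst hZ
  exact ⟨hpop.exists_partner_notMem_closedNbhd_of_blocks hP hU hblock,
    hpop.exists_partner_notMem_closedNbhd_of_blocks hP hU (hblock.symm hP)⟩
end

section
/- (Claim 4, forward direction, stability part) Let G be a roommates instance, U the set of vertices left uncovered by a popular matching P, Z = V ∖ N(U) ∖ U, P_Z ⊆ P a matching covering Z with each edge meeting Z, and V' = Z ∪ P_Z(Z) ∪ U. Then S = P ∖ P_Z is a stable matching in the subgraph induced on V ∖ V' and covers exactly the vertices of V ∖ V'. -/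
variable {V : Type*}

/-! If `p, q ∉ V'`, both are `P`-matched, and so are their partners `p' = P(p)`, `q' = P(q)`,
since `V'` is closed under taking `P`-partners. As `p' ∉ Z ∪ U`, it has a neighbour `u ∈ U`.
A blocking edge `pq` would then make the alternating path `u − p' − p − q − q'` an improvement:
switching `P` along it gains the votes of `u`, `p`, `q` and loses at most those of `p'`, `q'`,
contradicting popularity. -/

namespace IsMatching

variable {R : Roommates V} {M : V → Option V}

theorem symm (hM : IsMatching R M) {u v : V} (h : M u = some v) : M v = some u :=
  (hM u v h).2

theorem adj (hM : IsMatching R M) {u v : V} (h : M u = some v) : R.G.Adj u v :=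
  (hM u v h).1

theorem eq_of_eq_some (hM : IsMatching R M) {a b c : V} (ha : M a = some c)
    (hb : M b = some c) : a = b :=
  Option.some_injective _ ((hM.symm ha).symm.trans (hM.symm hb))

end IsMatching

theorem mem_of_partner_mem {R : Roommates V} {P PZ : V → Option V} {U Z : Set V}
    (hP : IsMatching R P) (hU : ∀ v ∈ U, P v = none)
    (hsub : ∀ u v, PZ u = some v → P u = some v) (hcov : ∀ z ∈ Z, ∃ y, PZ z = some y)
    {x y : V} (hxy : P x = some y) (hy : y ∈ Z ∪ {y | ∃ z ∈ Z, PZ z = some y} ∪ U) :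
    x ∈ Z ∪ {y | ∃ z ∈ Z, PZ z = some y} ∪ U := by
  rcases hy with (hyZ | ⟨z, hzZ, hzy⟩) | hyU
  · obtain ⟨w, hw⟩ := hcov y hyZ
    have hwx : w = x := Option.some_injective _ ((hsub y w hw).symm.trans (hP.symm hxy))
    exact Or.inl (Or.inr ⟨y, hyZ, hwx ▸ hw⟩)
  · exact Or.inl (Or.inl (hP.eq_of_eq_some (hsub z y hzy) hxy ▸ hzZ))
  · exact absurd (hP.symm hxy) (by simp [hU y hyU])

/-- The symmetric difference of `M` with the path `u − p' − p − q − q'`, when `M` matches `pp'`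
and `qq'` and leaves `u` unmatched. -/
def pathSwap [DecidableEq V] (M : V → Option V) (u p' p q q' : V) : V → Option V := fun x =>
  if x = u then some p' else if x = p' then some u else
  if x = p then some q else if x = q then some p else
  if x = q' then none else M x

section PathSwap

variable [DecidableEq V] {R : Roommates V} {P : V → Option V} {u p p' q q' : V}

theorem isMatching_pathSwap (hP : IsMatching R P) (hu : P u = none) (hp : P p = some p')
    (hq : P q = some q') (hup' : R.G.Adj u p') (hpq : R.G.Adj p q) (hne : P p ≠ some q) :
    IsMatching R (pathSwap P u p' p q q') := by
  have := hP.symm hp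
  have := hP.symm hq
  intro a b hab
  unfold pathSwap at *
  split_ifs at hab ⊢ <;> grind [IsMatching, SimpleGraph.Adj.symm, SimpleGraph.Adj.ne]

/-- Off the path the two matchings agree, `u` is unmatched in `P`, and `p`, `q` prefer each other
to their `P`-partners. -/
theorem prefers_pathSwap_subset (hP : IsMatching R P) (hu : P u = none) (hp : P p = some p')
    (hq : P q = some q') (hblock : Blocks R P p q) :
    {v | Prefers R P (pathSwap P u p' p q q') v} ⊆ {p', q'} := by
  obtain ⟨-, -, hrp, hrq⟩ := hblock
  have := hrp p' hp
  have := hrq q' hq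
  have := (hP.adj hp).ne
  intro v hv
  unfold pathSwap Prefers at *
  grind

theorem subset_prefers_pathSwap (hP : IsMatching R P) (hu : P u = none) (hp : P p = some p')
    (hq : P q = some q') (hblock : Blocks R P p q) :
    {u, p, q} ⊆ {v | Prefers R (pathSwap P u p' p q q') P v} := by
  obtain ⟨hpq, hne, hrp, hrq⟩ := hblock
  have hpu : p ≠ u := by grind
  have hqu : q ≠ u := by grind
  have hqp' : q ≠ p' := by grind
  rintro v (rfl | rfl | rfl)
  · exact Or.inl ⟨p', by simp [pathSwap], hu⟩
  · exact Or.inr ⟨q, p', by simp [pathSwap, hpu, (hP.adj hp).ne], hp, hrp p' hp⟩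
  · exact Or.inr ⟨p, q', by simp [pathSwap, hqu, hqp', hpq.ne'], hq, hrq q' hq⟩

end PathSwap

theorem Popular.not_blocks_of_partner_adj_unmatched [Fintype V] {R : Roommates V}
    {P : V → Option V} {u p p' q q' : V} (hpop : Popular R P) (hP : IsMatching R P)
    (hu : P u = none) (hp : P p = some p') (hp'u : R.G.Adj p' u) (hq : P q = some q') :
    ¬ Blocks R P p q := by
  classical
  intro hblock
  have hlose : {v | Prefers R P (pathSwap P u p' p q q') v}.ncard ≤ 2 :=
    (Set.ncard_le_ncard (prefers_pathSwap_subset hP hu hp hq hblock)).trans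
      ((Set.ncard_insert_le _ _).trans (by rw [Set.ncard_singleton]))
  have hwin : 3 ≤ {v | Prefers R (pathSwap P u p' p q q') P v}.ncard := by
    refine le_of_eq_of_le ?_ (Set.ncard_le_ncard (subset_prefers_pathSwap hP hu hp hq hblock))
    exact (Set.ncard_eq_three.mpr ⟨u, p, q, by grind, by grind, hblock.1.ne, rfl⟩).symm
  have := hpop _ (isMatching_pathSwap hP hu hp hq hp'u.symm hblock.1 hblock.2.1)
  omega

theorem claim4_forward_stability_general {V : Type*} [Fintype V] (R : Roommates V)
    (P : V → Option V) (hP : IsMatching R P) (hpop : Popular R P)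
    (U : Set V) (hU : ∀ v, P v = none ↔ v ∈ U)
    (Z : Set V) (hZ : Z = {w | w ∉ U ∧ ∀ x ∈ U, ¬ R.G.Adj w x})
    (PZ : V → Option V)
    (hsub : ∀ u v, PZ u = some v → P u = some v)
    (hcov : ∀ z ∈ Z, ∃ y, PZ z = some y)
    (V' : Set V) (hV' : V' = Z ∪ {y | ∃ z ∈ Z, PZ z = some y} ∪ U) :
    (∀ x, x ∉ V' → ∃ y, P x = some y ∧ y ∉ V') ∧
    (∀ p q, p ∉ V' → q ∉ V' → ¬ Blocks R P p q) := by
  have hclosed : ∀ {x y}, P x = some y → y ∈ V' → x ∈ V' := by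
    subst hV'
    exact mem_of_partner_mem hP (fun v => (hU v).mpr) hsub hcov
  have hcover : ∀ x, x ∉ V' → ∃ y, P x = some y ∧ y ∉ V' := by
    intro x hx
    obtain ⟨y, hxy⟩ := Option.ne_none_iff_exists'.mp fun h => hx (hV' ▸ Or.inr ((hU x).mp h))
    exact ⟨y, hxy, fun hy => hx (hclosed hxy hy)⟩
  refine ⟨hcover, fun p q hp hq => ?_⟩
  obtain ⟨p', hpp', hp'⟩ := hcover p hp
  obtain ⟨q', hqq', -⟩ := hcover q hq
  obtain ⟨u, huU, hp'u⟩ : ∃ u ∈ U, R.G.Adj p' u := by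
    by_contra! h
    exact hp' (hV' ▸ Or.inl (Or.inl (hZ ▸ ⟨fun hp'U => hp' (hV' ▸ Or.inr hp'U), h⟩)))
  exact hpop.not_blocks_of_partner_adj_unmatched hP ((hU u).mpr huU) hpp' hp'u hqq'

/-- Claim 4, forward direction, stability part: with `P` popular
leaving exactly `U` uncovered, `P_Z ⊆ P` a matching covering `Z` whose edges
all meet `Z`, and `V' = Z ∪ P_Z(Z) ∪ U`, the matching `S = P ∖ P_Z` covers
exactly `V ∖ V'` (every vertex outside `V'` is `P`-matched to a vertex outside
`V'`) and is stable in the subgraph induced on `V ∖ V'`. -/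
theorem claim4_forward_stability {V : Type*} [Fintype V] (R : Roommates V)
    (P : V → Option V) (hP : IsMatching R P) (hpop : Popular R P)
    (U : Set V) (hU : ∀ v, P v = none ↔ v ∈ U)
    (Z : Set V) (hZ : Z = {w | w ∉ U ∧ ∀ x ∈ U, ¬ R.G.Adj w x})
    (PZ : V → Option V) (hPZ : IsMatching R PZ)
    (hsub : ∀ u v, PZ u = some v → P u = some v)
    (hcov : ∀ z ∈ Z, ∃ y, PZ z = some y)
    (hmeet : ∀ u v, PZ u = some v → u ∈ Z ∨ v ∈ Z)
    (V' : Set V) (hV' : V' = Z ∪ {y | ∃ z ∈ Z, PZ z = some y} ∪ U) :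
    (∀ x, x ∉ V' → ∃ y, P x = some y ∧ y ∉ V') ∧
    (∀ p q, p ∉ V' → q ∉ V' → ¬ Blocks R P p q) :=
  claim4_forward_stability_general R P hP hpop U hU Z hZ PZ hsub hcov V' hV'
end

section
/- (Claim 4, forward direction, labeling part 1) If P is a popular matching leaving exactly U uncovered, then every edge of G incident to a vertex u ∈ U is labeled (+,−) with respect to P, with the + at u; equivalently, no edge incident to an unmatched vertex blocks P, and the matched endpoint of such an edge strictly prefers its P-partner. -/
variable {V : Type*}

/- If `u` is single in `P` and `(u, v)` is an edge on which `v` also votes `+`, then matching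
`u` with `v` (and leaving `v`'s old partner single) wins two votes, those of `u` and `v`, and
loses at most one, that of `v`'s old partner; so `P` is not popular. -/

open Classical in
noncomputable def matchPair (M : V → Option V) (u v : V) : V → Option V := fun x =>
  if x = u then some v else if x = v then some u else if M x = some v then none else M x

section MatchPair

variable {M : V → Option V} {u v x : V}

@[simp]
theorem matchPair_left : matchPair M u v u = some v := by
  simp [matchPair]

theorem matchPair_right (huv : u ≠ v) : matchPair M u v v = some u := by
  simp [matchPair, huv.symm]

theorem matchPair_of_ne (hxu : x ≠ u) (hxv : x ≠ v) (hx : M x ≠ some v) :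
    matchPair M u v x = M x := by
  simp [matchPair, hxu, hxv, hx]

theorem IsMatching.matchPair {R : Roommates V} (hM : IsMatching R M) (hu : M u = none)
    (hadj : R.G.Adj u v) : IsMatching R (matchPair M u v) := by
  have huv : u ≠ v := hadj.ne
  intro x y hxy
  by_cases hxu : x = u
  · subst hxu
    obtain rfl : v = y := by simpa using hxy
    exact ⟨hadj, matchPair_right huv⟩
  by_cases hxv : x = v
  · subst hxv
    obtain rfl : u = y := by simpa [matchPair_right huv] using hxy
    exact ⟨hadj.symm, matchPair_left⟩
  have hx : M x ≠ some v := fun h => by simp [_root_.matchPair, hxu, hxv, h] at hxy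
  rw [matchPair_of_ne hxu hxv hx] at hxy
  obtain ⟨hxy_adj, hyx⟩ := hM x y hxy
  have hyu : y ≠ u := by rintro rfl; simp [hu] at hyx
  have hyv : y ≠ v := by rintro rfl; exact hx hxy
  have hy : M y ≠ some v := by rw [hyx]; simpa using hxv
  exact ⟨hxy_adj, by rw [matchPair_of_ne hyu hyv hy, hyx]⟩

end MatchPair

theorem not_prefers_of_eq_s11 {R : Roommates V} {M M' : V → Option V} {x : V} (h : M x = M' x) :
    ¬ Prefers R M M' x := by
  rintro (⟨w, hw, hw'⟩ | ⟨w, w', hw, hw', hlt⟩)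
  · simp [h, hw'] at hw
  · obtain rfl : w' = w := by simpa [h, hw'] using hw
    exact lt_irrefl _ hlt

section Blocking

variable {R : Roommates V} {P : V → Option V} {u v : V}

theorem prefers_matchPair_left (hu : P u = none) : Prefers R (matchPair P u v) P u :=
  Or.inl ⟨v, matchPair_left, hu⟩

theorem prefers_matchPair_right (huv : u ≠ v) (hvu : VotePlus R P v u) :
    Prefers R (matchPair P u v) P v := by
  cases hv : P v with
  | none => exact Or.inl ⟨u, matchPair_right huv, hv⟩
  | some w => exact Or.inr ⟨u, w, matchPair_right huv, hv, hvu w hv⟩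

theorem setOf_prefers_matchPair_subset (hP : IsMatching R P) (hu : P u = none) (huv : u ≠ v)
    (hvu : VotePlus R P v u) : {x | Prefers R P (matchPair P u v) x} ⊆ {x | P v = some x} := by
  intro x hx
  by_cases hxv : P x = some v
  · exact (hP x v hxv).2
  by_cases hxu : x = u
  · subst hxu
    rcases hx with ⟨w, hw, -⟩ | ⟨w, -, hw, -⟩ <;> simp [hu] at hw
  by_cases hxv' : x = v
  · subst hxv'
    rcases hx with ⟨w, -, hw'⟩ | ⟨w, w', hw, hw', hlt⟩
    · simp [matchPair_right huv] at hw'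
    · obtain rfl : u = w' := by simpa [matchPair_right huv] using hw'
      exact absurd (hvu w hw) (lt_asymm hlt)
  exact absurd hx (not_prefers_of_eq_s11 (matchPair_of_ne hxu hxv' hxv).symm)

theorem Popular.not_blocks_of_eq_none [Fintype V] (hP : IsMatching R P) (hpop : Popular R P)
    (hu : P u = none) : ¬ Blocks R P u v := by
  rintro ⟨hadj, -, -, hvu⟩
  have huv : u ≠ v := hadj.ne
  have hnew : 2 ≤ {x | Prefers R (matchPair P u v) P x}.ncard := by
    rw [← Set.ncard_pair huv]
    apply Set.ncard_le_ncard _ (Set.toFinite _)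
    rintro x (rfl | rfl)
    exacts [prefers_matchPair_left hu, prefers_matchPair_right huv hvu]
  have hold : {x | Prefers R P (matchPair P u v) x}.ncard ≤ 1 :=
    (Set.ncard_le_ncard (setOf_prefers_matchPair_subset hP hu huv hvu)).trans
      ((Set.ncard_le_one_iff (Set.toFinite _)).mpr fun ha hb =>
        Option.some_injective _ (ha.symm.trans hb))
  have := hpop _ (hP.matchPair hu hadj)
  omega

end Blocking

/-- Claim 4, forward direction, labeling part 1: if `P` is a
popular matching, then every edge incident to an uncovered vertex `u` is
labeled `(+,−)` with the `+` at `u`: the other endpoint `v` is matched and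
strictly prefers its `P`-partner to `u`. -/
theorem claim4_label1 {V : Type*} [Fintype V] (R : Roommates V)
    (P : V → Option V) (hP : IsMatching R P) (hpop : Popular R P) :
    ∀ u v, P u = none → R.G.Adj u v →
      ∃ w, P v = some w ∧ R.rank v w < R.rank v u := by
  intro u v hu hadj
  by_contra! hno
  have hvu : VotePlus R P v u := fun w hw =>
    have hwu : w ≠ u := by rintro rfl; simp [(hP v w hw).2] at hu
    lt_of_le_of_ne (hno w hw) fun h => hwu (R.rank_inj v w u (hP v w hw).1 hadj.symm h.symm)
  exact hpop.not_blocks_of_eq_none hP hu ⟨hadj, by simp [hu], by simp [hu], hvu⟩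
end

section
/- If a stable matching exists in the edge-deleted graph G[V ∖ V'] but does not cover all of V ∖ V', then no stable matching of that graph covers all of V ∖ V' (Rural Hospitals Theorem for stable roommates): all stable matchings of a roommates instance cover exactly the same set of vertices. -/
variable {V : Type*}

/-!
If `v` is unmatched in `M` but matched in `M'`, follow the walk from `v` that alternately
uses `M'`-edges and `M`-edges. Stability of the matching used next forces the current vertex
to have a partner in it, and one it strictly prefers to the vertex it came from, so the walk
never stops. In a union of two matchings such a walk cannot revisit a vertex, so it is an
injection of `ℕ` into the finite vertex set, which is absurd.
-/

section RuralHospitals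

variable {R : Roommates V} {M M' : V → Option V}

theorem IsStable.exists_partner_rank_lt (hM : IsMatching R M) (hMs : IsStable R M) {u w : V}
    (hadj : R.G.Adj u w) (hvote : VotePlus R M u w) :
    ∃ z, M w = some z ∧ R.rank w z < R.rank w u := by
  have hnot : M u ≠ some w := fun h => lt_irrefl _ (hvote w h)
  obtain ⟨z, hz, hle⟩ : ∃ z, M w = some z ∧ R.rank w z ≤ R.rank w u := by
    by_contra! h
    exact hMs u w ⟨hadj, hnot, hvote, h⟩
  refine ⟨z, hz, lt_of_le_of_ne hle fun heq => hnot ?_⟩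
  rw [← R.rank_inj w z u (hM w z hz).1 hadj.symm heq]
  exact (hM w z hz).2

variable (M M') in
def altMatching (n : ℕ) : V → Option V :=
  if Even n then M' else M

theorem altMatching_congr {m n : ℕ} (h : m % 2 = n % 2) :
    altMatching M M' m = altMatching M M' n := by
  simp only [altMatching, Nat.even_iff, h]

theorem altMatching_add_one_eq_M_or (n : ℕ) :
    altMatching M M' (n + 1) = M ∨ altMatching M M' n = M := by
  by_cases hn : Even n
  · simp [altMatching, hn, Nat.even_add_one]
  · simp [altMatching, hn]

theorem isMatching_and_isStable_altMatching (hM : IsMatching R M) (hMs : IsStable R M)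
    (hM' : IsMatching R M') (hM's : IsStable R M') (n : ℕ) :
    IsMatching R (altMatching M M' n) ∧ IsStable R (altMatching M M' n) := by
  unfold altMatching
  split_ifs
  exacts [⟨hM', hM's⟩, ⟨hM, hMs⟩]

variable (M M') in
/-- `getD v` is only a placeholder: under the hypotheses of `altWalk_step` the walk never stops. -/
def altWalk (v : V) : ℕ → V
  | 0 => v
  | n + 1 => (altMatching M M' n (altWalk v n)).getD v

theorem altWalk_step (hM : IsMatching R M) (hMs : IsStable R M)
    (hM' : IsMatching R M') (hM's : IsStable R M') {v : V} (hv : M v = none)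
    (hv' : M' v ≠ none) (n : ℕ) :
    altMatching M M' n (altWalk M M' v n) = some (altWalk M M' v (n + 1)) ∧
      VotePlus R (altMatching M M' (n + 1)) (altWalk M M' v n) (altWalk M M' v (n + 1)) := by
  induction n with
  | zero =>
    obtain ⟨w, hw⟩ := Option.ne_none_iff_exists'.mp hv'
    refine ⟨?_, fun z hz => ?_⟩
    · simp [altWalk, altMatching, hw]
    · simp [altWalk, altMatching, hv] at hz
  | succ n ih =>
    set x := altWalk M M' v
    obtain ⟨hedge, hvote⟩ := ih
    have hback := (isMatching_and_isStable_altMatching hM hMs hM' hM's n).1 _ _ hedge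
    obtain ⟨hmatch, hstable⟩ := isMatching_and_isStable_altMatching hM hMs hM' hM's (n + 1)
    obtain ⟨z, hz, hlt⟩ := hstable.exists_partner_rank_lt hmatch hback.1 hvote
    have hnext : x (n + 2) = z := by
      show (altMatching M M' (n + 1) (x (n + 1))).getD v = z
      rw [hz]; rfl
    refine ⟨hnext ▸ hz, fun y hy => ?_⟩
    rw [altMatching_congr (show (n + 1 + 1) % 2 = n % 2 by omega), hback.2] at hy
    cases hy
    rwa [hnext]

theorem altWalk_injective (hM : IsMatching R M) (hMs : IsStable R M)
    (hM' : IsMatching R M') (hM's : IsStable R M') {v : V} (hv : M v = none)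
    (hv' : M' v ≠ none) : Function.Injective (altWalk M M' v) := by
  set x := altWalk M M' v
  have hfwd n : altMatching M M' n (x n) = some (x (n + 1)) :=
    (altWalk_step hM hMs hM' hM's hv hv' n).1
  have hback n : altMatching M M' n (x (n + 1)) = some (x n) :=
    ((isMatching_and_isStable_altMatching hM hMs hM' hM's n).1 _ _ (hfwd n)).2
  refine Function.Injective.of_lt_imp_ne fun a => ?_
  induction a using Nat.strong_induction_on with
  | _ a ih =>
    intro b hab heq
    obtain ⟨b, rfl⟩ : ∃ b', b = b' + 1 := ⟨b - 1, by omega⟩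
    rcases a with _ | a
    · -- `v` is unmatched in `M`, every later vertex of the walk is matched in `M`
      have hx0 : x 0 = v := rfl
      rcases altMatching_add_one_eq_M_or (M := M) (M' := M') b with h | h
      · have := hfwd (b + 1)
        rw [h, ← heq, hx0, hv] at this
        cases this
      · have := hback b
        rw [h, ← heq, hx0, hv] at this
        cases this
    · -- the `altMatching a`-partner of `x (a + 1) = x (b + 1)` is `x a`, and also `x b` or `x (b + 2)`
      by_cases hpar : a % 2 = b % 2
      · have := hback a
        rw [heq, altMatching_congr hpar, hback b] at this
        exact ih a (by omega) b (by omega) (Option.some_injective _ this).symm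
      · have := hback a
        rw [heq, altMatching_congr (show a % 2 = (b + 1) % 2 by omega), hfwd (b + 1)] at this
        exact ih a (by omega) (b + 2) (by omega) (Option.some_injective _ this).symm

theorem eq_none_of_isStable_of_eq_none [Finite V] (hM : IsMatching R M) (hMs : IsStable R M)
    (hM' : IsMatching R M') (hM's : IsStable R M') {v : V} (hv : M v = none) : M' v = none := by
  by_contra hv'
  exact not_injective_infinite_finite _ (altWalk_injective hM hMs hM' hM's hv hv')

end RuralHospitals

/-- Rural Hospitals Theorem for stable roommates: any two stable
matchings of a roommates instance cover exactly the same set of vertices. -/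
theorem rural_hospitals {V : Type*} [Fintype V] (R : Roommates V)
    (M M' : V → Option V)
    (hM : IsMatching R M) (hMs : IsStable R M)
    (hM' : IsMatching R M') (hM's : IsStable R M') :
    ∀ v, M v = none ↔ M' v = none := fun _ =>
  ⟨eq_none_of_isStable_of_eq_none hM hMs hM' hM's,
    eq_none_of_isStable_of_eq_none hM' hM's hM hMs⟩
end
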